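/- Under the Tobit model, if E[‖X‖²] < ∞, then the conditional expectation of the score at the true parameters given X vanishes almost surely: E[ s(Y, X, D; δ₀, γ₀) | X ] = 0 a.s., where the conditional expectation is with respect to the σ-algebra generated by X. -/

import Mathlib

open MeasureTheory ProbabilityTheory Real Filter Set

noncomputable section

/-- The standard normal density `φ`. -/
def gPDF (t : ℝ) : ℝ := (Real.sqrt (2 * Real.pi))⁻¹ * Real.exp (-t ^ 2 / 2)

/-- The standard normal cumulative distribution function `Φ`. -/
def gCDF (t : ℝ) : ℝ := ∫ s in Set.Iic t, gPDF s

/-- The inverse Mills ratio `λ(v) = φ(v)/(1 - Φ(v))`. -/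
def mills (v : ℝ) : ℝ := gPDF v / (1 - gCDF v)

/-- Euclidean norm of a vector in `ℝ^n`. -/
def vnorm {n : ℕ} (x : Fin n → ℝ) : ℝ := Real.sqrt (∑ i, (x i) ^ 2)

/-- Frobenius (Euclidean) norm of a real matrix. -/
def frob {m n : Type*} [Fintype m] [Fintype n] (M : Matrix m n ℝ) : ℝ :=
  Real.sqrt (∑ i, ∑ j, (M i j) ^ 2)

/-- Dot product `xᵀδ`. -/
def dotp {n : ℕ} (x δ : Fin n → ℝ) : ℝ := ∑ i, x i * δ i

/-- The block matrix `[[x xᵀ, -y·x], [-y·xᵀ, γ⁻² + y²]]`. -/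
def blockA (K : ℕ) (x : Fin K → ℝ) (y γ : ℝ) :
    Matrix (Fin K ⊕ Unit) (Fin K ⊕ Unit) ℝ :=
  Matrix.fromBlocks (Matrix.vecMulVec x x) (Matrix.of fun i _ => -(y * x i))
    (Matrix.of fun _ j => -(y * x j)) (Matrix.of fun _ _ => γ⁻¹ ^ 2 + y ^ 2)

/-- The block matrix `[[x xᵀ, -c·x], [-c·xᵀ, c²]]`. -/
def blockB (K : ℕ) (x : Fin K → ℝ) (c : ℝ) :
    Matrix (Fin K ⊕ Unit) (Fin K ⊕ Unit) ℝ :=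
  Matrix.fromBlocks (Matrix.vecMulVec x x) (Matrix.of fun i _ => -(c * x i))
    (Matrix.of fun _ j => -(c * x j)) (Matrix.of fun _ _ => c ^ 2)

/-- The Hessian of the reparameterized log conditional likelihood of the truncated
regression model, `H(y, x; δ, γ)` with `v = γc - xᵀδ`. -/
def truncHess (K : ℕ) (c y : ℝ) (x δ : Fin K → ℝ) (γ : ℝ) :
    Matrix (Fin K ⊕ Unit) (Fin K ⊕ Unit) ℝ :=
  -(blockA K x y γ) +
    (mills (γ * c - dotp x δ) * (mills (γ * c - dotp x δ) - (γ * c - dotp x δ))) • blockB K x c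

/-- The Hessian of the reparameterized log conditional likelihood of the Tobit model,
`H(y, x, d; δ, γ)` with `v = γc - xᵀδ`. -/
def tobitHess (K : ℕ) (c y : ℝ) (x : Fin K → ℝ) (d : ℝ) (δ : Fin K → ℝ) (γ : ℝ) :
    Matrix (Fin K ⊕ Unit) (Fin K ⊕ Unit) ℝ :=
  -((1 - d) • blockA K x y γ) -
    (d * mills (-(γ * c - dotp x δ)) * (mills (-(γ * c - dotp x δ)) + (γ * c - dotp x δ))) •
      blockB K x c

/-- The score of the reparameterized log conditional likelihood of the Tobit model,
`s(y, x, d; δ, γ)` with `v = γc - xᵀδ`. -/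
def tobitScore (K : ℕ) (c y : ℝ) (x : Fin K → ℝ) (d : ℝ) (δ : Fin K → ℝ) (γ : ℝ) :
    Fin K ⊕ Unit → ℝ := fun j =>
  (1 - d) *
      Sum.elim (fun i => (γ * y - dotp x δ) * x i) (fun _ => 1 / γ - (γ * y - dotp x δ) * y) j
    + d * mills (-(γ * c - dotp x δ)) * Sum.elim (fun i => -x i) (fun _ => c) j


open scoped NNReal ENNReal

lemma gPDF_pos (t : ℝ) : 0 < gPDF t := by unfold gPDF; positivity

lemma gPDF_nonneg (t : ℝ) : 0 ≤ gPDF t := (gPDF_pos t).le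

lemma continuous_gPDF : Continuous gPDF := by unfold gPDF; fun_prop

lemma gPDF_eq (t : ℝ) : gPDF t = (Real.sqrt (2 * Real.pi))⁻¹ * Real.exp (-(1/2) * t ^ 2) := by
  unfold gPDF; ring_nf

lemma integrable_gPDF : Integrable gPDF := by
  have : Integrable (fun t : ℝ => (Real.sqrt (2 * Real.pi))⁻¹ * Real.exp (-(1/2) * t ^ 2)) :=
    (integrable_exp_neg_mul_sq (by norm_num)).const_mul _
  exact this.congr (Eventually.of_forall fun t => (gPDF_eq t).symm)

lemma integrable_abs_mul_gPDF : Integrable (fun t => |t| * gPDF t) := by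
  have h := integrable_rpow_mul_exp_neg_mul_sq (b := 1/2) (by norm_num) (s := 1) (by norm_num)
  simp only [rpow_one] at h
  have h2 : Integrable (fun t : ℝ =>
      (Real.sqrt (2 * Real.pi))⁻¹ * |t * Real.exp (-(1/2) * t ^ 2)|) := (h.abs).const_mul _
  refine h2.congr (Eventually.of_forall fun t => ?_)
  show (Real.sqrt (2 * Real.pi))⁻¹ * |t * Real.exp (-(1/2) * t ^ 2)| = |t| * gPDF t
  rw [gPDF_eq, abs_mul, abs_of_pos (exp_pos _)]; ring

lemma integrable_sq_mul_gPDF : Integrable (fun t => t ^ 2 * gPDF t) := by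
  have h := integrable_rpow_mul_exp_neg_mul_sq (b := 1/2) (by norm_num) (s := 2) (by norm_num)
  have h2 : Integrable (fun t : ℝ =>
      (Real.sqrt (2 * Real.pi))⁻¹ * (t ^ (2:ℝ) * Real.exp (-(1/2) * t ^ 2))) := h.const_mul _
  refine h2.congr (Eventually.of_forall fun t => ?_)
  show (Real.sqrt (2 * Real.pi))⁻¹ * (t ^ (2:ℝ) * Real.exp (-(1/2) * t ^ 2)) = t ^ 2 * gPDF t
  rw [gPDF_eq, ← rpow_natCast t 2]; ring

lemma integrable_mul_gPDF : Integrable (fun t => t * gPDF t) := by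
  refine integrable_abs_mul_gPDF.mono' ?_ (Eventually.of_forall fun t => ?_)
  · exact (continuous_id.mul continuous_gPDF).aestronglyMeasurable
  · show ‖t * gPDF t‖ ≤ |t| * gPDF t
    rw [norm_eq_abs, abs_mul, abs_of_nonneg (gPDF_nonneg t)]

lemma integral_gPDF : ∫ t, gPDF t = 1 := by
  have h := integral_gaussian (1/2)
  have : ∫ t, gPDF t = (Real.sqrt (2 * Real.pi))⁻¹ * ∫ t : ℝ, Real.exp (-(1/2) * t ^ 2) := by
    rw [← integral_const_mul]
    exact integral_congr_ae (Eventually.of_forall fun t => gPDF_eq t)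
  rw [this, h]
  rw [show π / (1/2) = 2 * π by ring]
  rw [inv_mul_cancel₀]
  positivity

lemma hasDerivAt_gPDF (t : ℝ) : HasDerivAt gPDF (-t * gPDF t) t := by
  have h : HasDerivAt (fun t : ℝ => -t ^ 2 / 2) (-t) t := by
    have := ((hasDerivAt_pow 2 t).neg).div_const 2
    simpa using this.congr_deriv (by ring)
  have := (h.exp).const_mul (Real.sqrt (2 * Real.pi))⁻¹
  refine this.congr_deriv ?_ |>.congr_of_eventuallyEq ?_
  · unfold gPDF; ring
  · exact Eventually.of_forall fun s => rfl

lemma tendsto_gPDF_atTop : Tendsto gPDF atTop (nhds 0) := by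
  have h1 : Tendsto (fun t : ℝ => -t ^ 2 / 2) atTop atBot := by
    apply Tendsto.atBot_div_const (by norm_num)
    exact tendsto_neg_atBot_iff.mpr (tendsto_pow_atTop (by norm_num))
  have h2 : Tendsto (fun t : ℝ => Real.exp (-t ^ 2 / 2)) atTop (nhds 0) :=
    Real.tendsto_exp_atBot.comp h1
  have h3 := h2.const_mul (Real.sqrt (2 * Real.pi))⁻¹
  rw [mul_zero] at h3
  exact h3

lemma tendsto_mul_gPDF_atTop : Tendsto (fun t => t * gPDF t) atTop (nhds 0) := by
  have hb : Tendsto (fun t : ℝ => (Real.sqrt (2 * Real.pi))⁻¹ * Real.exp (-t / 2))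
      atTop (nhds 0) := by
    have h1 : Tendsto (fun t : ℝ => -t / 2) atTop atBot :=
      Tendsto.atBot_div_const (by norm_num) (tendsto_neg_atBot_iff.mpr tendsto_id)
    have h3 := (Real.tendsto_exp_atBot.comp h1).const_mul (Real.sqrt (2 * Real.pi))⁻¹
    rw [mul_zero] at h3
    exact h3
  refine tendsto_of_tendsto_of_tendsto_of_le_of_le' tendsto_const_nhds hb ?_ ?_
  · filter_upwards [eventually_ge_atTop (0:ℝ)] with t ht
    exact mul_nonneg ht (gPDF_nonneg t)
  · filter_upwards [eventually_ge_atTop (3:ℝ)] with t ht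
    have h3 : t * Real.exp (-t ^ 2 / 2) ≤ Real.exp (-t / 2) := by
      calc t * Real.exp (-t ^ 2 / 2) ≤ Real.exp t * Real.exp (-t ^ 2 / 2) := by
            apply mul_le_mul_of_nonneg_right _ (Real.exp_pos _).le
            nlinarith [Real.add_one_le_exp t]
          _ = Real.exp (t + -t ^ 2 / 2) := (Real.exp_add _ _).symm
          _ ≤ Real.exp (-t / 2) := by
            apply Real.exp_le_exp.mpr
            nlinarith
    show t * gPDF t ≤ (Real.sqrt (2 * Real.pi))⁻¹ * Real.exp (-t / 2)
    unfold gPDF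
    calc t * ((Real.sqrt (2 * Real.pi))⁻¹ * Real.exp (-t ^ 2 / 2))
        = (Real.sqrt (2 * Real.pi))⁻¹ * (t * Real.exp (-t ^ 2 / 2)) := by ring
      _ ≤ (Real.sqrt (2 * Real.pi))⁻¹ * Real.exp (-t / 2) := by
          apply mul_le_mul_of_nonneg_left h3 (by positivity)

lemma gPDF_even (t : ℝ) : gPDF (-t) = gPDF t := by unfold gPDF; rw [neg_pow]; norm_num

lemma gCDF_add_Ioi (v : ℝ) : gCDF v + ∫ t in Ioi v, gPDF t = 1 := by
  have := integral_add_compl (measurableSet_Iic (a := v)) integrable_gPDF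
  rw [compl_Iic] at this
  rw [gCDF]; rw [this, integral_gPDF]

lemma integral_Ioi_gPDF (v : ℝ) : ∫ t in Ioi v, gPDF t = 1 - gCDF v := by
  linarith [gCDF_add_Ioi v]

lemma gCDF_lt_one (v : ℝ) : gCDF v < 1 := by
  have h : 0 < ∫ t in Ioi v, gPDF t := by
    rw [setIntegral_pos_iff_support_of_nonneg_ae
      (Eventually.of_forall fun t => gPDF_nonneg t) integrable_gPDF.integrableOn]
    have : Function.support gPDF ∩ Ioi v = Ioi v := by
      rw [inter_eq_right]
      intro t _
      exact (gPDF_pos t).ne'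
    rw [this]
    simp
  linarith [gCDF_add_Ioi v]

lemma gCDF_pos (v : ℝ) : 0 < gCDF v := by
  rw [gCDF, setIntegral_pos_iff_support_of_nonneg_ae
    (Eventually.of_forall fun t => gPDF_nonneg t) integrable_gPDF.integrableOn]
  have : Function.support gPDF ∩ Iic v = Iic v := by
    rw [inter_eq_right]; intro t _; exact (gPDF_pos t).ne'
  rw [this]
  simp

lemma one_sub_gCDF_pos (v : ℝ) : 0 < 1 - gCDF v := by linarith [gCDF_lt_one v]

lemma gCDF_neg (v : ℝ) : gCDF (-v) = 1 - gCDF v := by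
  have h1 : gCDF (-v) = ∫ x in Iic (-v), gPDF (-x) := by
    rw [gCDF]
    exact integral_congr_ae (Eventually.of_forall fun x => (gPDF_even x).symm)
  rw [h1, integral_comp_neg_Iic, neg_neg]
  exact integral_Ioi_gPDF v

lemma gCDF_mono : Monotone gCDF := by
  intro a b hab
  exact setIntegral_mono_set integrable_gPDF.integrableOn
    (Eventually.of_forall fun t => gPDF_nonneg t)
    (HasSubset.Subset.eventuallyLE (Iic_subset_Iic.mpr hab))

lemma measurable_gCDF : Measurable gCDF := gCDF_mono.measurable

lemma measurable_mills : Measurable mills :=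
  continuous_gPDF.measurable.div (measurable_const.sub measurable_gCDF)

lemma mills_nonneg (v : ℝ) : 0 ≤ mills v :=
  div_nonneg (gPDF_nonneg v) (one_sub_gCDF_pos v).le

-- moment lemmas
lemma integral_Ioi_mul_gPDF (v : ℝ) : ∫ t in Ioi v, t * gPDF t = gPDF v := by
  have hten : Tendsto (fun t => -gPDF t) atTop (nhds 0) := by
    simpa using tendsto_gPDF_atTop.neg
  have hder : ∀ x ∈ Ici v, HasDerivAt (fun t => -gPDF t) (x * gPDF x) x := fun x _ =>
    ((hasDerivAt_gPDF x).neg).congr_deriv (by ring)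
  have h := integral_Ioi_of_hasDerivAt_of_tendsto' hder integrable_mul_gPDF.integrableOn hten
  rw [h]; ring

lemma integral_Ioi_sq_sub_gPDF (v : ℝ) :
    ∫ t in Ioi v, (t ^ 2 * gPDF t - gPDF t) = v * gPDF v := by
  have hten : Tendsto (fun t => -(t * gPDF t)) atTop (nhds 0) := by
    simpa using tendsto_mul_gPDF_atTop.neg
  have hder : ∀ x ∈ Ici v, HasDerivAt (fun t => -(t * gPDF t))
      (x ^ 2 * gPDF x - gPDF x) x := fun x _ => by
    have h1 : HasDerivAt (fun t => t * gPDF t) (1 * gPDF x + x * (-x * gPDF x)) x :=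
      (hasDerivAt_id x).mul (hasDerivAt_gPDF x)
    exact h1.neg.congr_deriv (by ring)
  have h := integral_Ioi_of_hasDerivAt_of_tendsto' hder
    (integrable_sq_mul_gPDF.sub integrable_gPDF).integrableOn hten
  rw [h]; ring

lemma integral_Ioi_sq_mul_gPDF (v : ℝ) :
    ∫ t in Ioi v, t ^ 2 * gPDF t = (1 - gCDF v) + v * gPDF v := by
  have h2 : ∫ t in Ioi v, (t ^ 2 * gPDF t - gPDF t)
      = (∫ t in Ioi v, t ^ 2 * gPDF t) - ∫ t in Ioi v, gPDF t :=
    integral_sub integrable_sq_mul_gPDF.integrableOn integrable_gPDF.integrableOn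
  have h3 := integral_Ioi_sq_sub_gPDF v
  have h4 := integral_Ioi_gPDF v
  linarith

lemma gPDF_le_gPDF_zero (t : ℝ) : gPDF t ≤ gPDF 0 := by
  unfold gPDF
  apply mul_le_mul_of_nonneg_left _ (by positivity)
  apply Real.exp_le_exp.mpr
  nlinarith [sq_nonneg t]

/-- The Mills-ratio tail lower bound for positive arguments. -/
lemma tail_lb {u : ℝ} (hu : 0 < u) : u * gPDF u / (u ^ 2 + 1) ≤ 1 - gCDF u := by
  set f : ℝ → ℝ := fun t => -(t * gPDF t / (t ^ 2 + 1)) with hf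
  set f' : ℝ → ℝ := fun t => gPDF t * (t ^ 4 + 2 * t ^ 2 - 1) / (t ^ 2 + 1) ^ 2 with hf'
  have hder : ∀ x ∈ Ici u, HasDerivAt f (f' x) x := by
    intro x _
    have hx1 : HasDerivAt (fun t : ℝ => t * gPDF t) (1 * gPDF x + x * (-x * gPDF x)) x :=
      (hasDerivAt_id x).mul (hasDerivAt_gPDF x)
    have hx2 : HasDerivAt (fun t : ℝ => t ^ 2 + 1) (2 * x) x := by
      simpa using ((hasDerivAt_pow 2 x).add_const 1)
    have hx3 := (hx1.div hx2 (by positivity)).neg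
    apply hx3.congr_deriv
    rw [← neg_div]
    rw [hf']
    congr 1
    ring
  have hint : IntegrableOn f' (Ioi u) := by
    apply Integrable.mono' integrable_gPDF.integrableOn
    · apply Measurable.aestronglyMeasurable
      exact (continuous_gPDF.measurable.mul (by fun_prop)).div (by fun_prop)
    · refine Eventually.of_forall fun x => ?_
      rw [norm_eq_abs, hf', abs_div, abs_mul, abs_of_nonneg (gPDF_nonneg x),
        abs_of_nonneg (by positivity : (0:ℝ) ≤ (x ^ 2 + 1) ^ 2)]
      rw [div_le_iff₀ (by positivity)]
      have h1 : |x ^ 4 + 2 * x ^ 2 - 1| ≤ (x ^ 2 + 1) ^ 2 := by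
        rw [abs_le]; constructor <;> nlinarith [sq_nonneg x, sq_nonneg (x ^ 2)]
      nlinarith [gPDF_nonneg x, abs_nonneg (x ^ 4 + 2 * x ^ 2 - 1)]
  have hten : Tendsto f atTop (nhds 0) := by
    have h1 : Tendsto (fun t : ℝ => (t ^ 2 + 1)⁻¹) atTop (nhds 0) := by
      apply tendsto_inv_atTop_zero.comp
      apply tendsto_atTop_add_const_right
      exact tendsto_pow_atTop (by norm_num)
    have h2 := (tendsto_mul_gPDF_atTop.mul h1).neg
    simp only [mul_zero, neg_zero] at h2
    refine h2.congr (fun t => ?_)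
    rw [hf]; ring_nf
  have heq := integral_Ioi_of_hasDerivAt_of_tendsto' hder hint hten
  have hle : ∫ t in Ioi u, f' t ≤ ∫ t in Ioi u, gPDF t := by
    apply setIntegral_mono_on hint integrable_gPDF.integrableOn measurableSet_Ioi
    intro x _
    rw [hf', div_le_iff₀ (by positivity)]
    nlinarith [gPDF_nonneg x, sq_nonneg x]
  rw [heq, integral_Ioi_gPDF] at hle
  rw [hf] at hle
  simp only [zero_sub, neg_neg] at hle
  exact hle

/-- Linear bound for the inverse Mills ratio. -/
lemma mills_le (u : ℝ) : mills u ≤ (gPDF 0 / (1 - gCDF 1) + 2) + |u| := by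
  rcases le_or_gt u 1 with hu | hu
  · have h1 : mills u ≤ gPDF 0 / (1 - gCDF 1) := by
      apply div_le_div₀ (gPDF_nonneg 0) (gPDF_le_gPDF_zero u) (one_sub_gCDF_pos 1)
      have := gCDF_mono hu
      linarith
    have := abs_nonneg u
    linarith
  · have hu0 : 0 < u := by linarith
    have key := tail_lb hu0
    have hb := one_sub_gCDF_pos u
    have h5 : mills u ≤ (u ^ 2 + 1) / u := by
      have key2 : u * gPDF u ≤ (1 - gCDF u) * (u ^ 2 + 1) :=
        (div_le_iff₀ (by positivity)).mp key
      rw [mills, div_le_div_iff₀ hb hu0]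
      nlinarith [key2]
    have h6 : (u ^ 2 + 1) / u ≤ u + 1 := by
      rw [div_le_iff₀ hu0]
      nlinarith
    have h7 : 0 ≤ gPDF 0 / (1 - gCDF 1) :=
      div_nonneg (gPDF_nonneg 0) (one_sub_gCDF_pos 1).le
    rw [abs_of_pos hu0]
    linarith

lemma mills_neg_eq (v : ℝ) : mills (-v) = gPDF v / gCDF v := by
  rw [mills, gPDF_even, gCDF_neg]
  congr 1
  ring

lemma inner_integral_zero (K : ℕ) (c σ₀ : ℝ) (hσ : 0 < σ₀) (β₀ : Fin K → ℝ)
    (x : Fin K → ℝ) (j : Fin K ⊕ Unit) :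
    ∫ s, gPDF s * tobitScore K c (max (dotp x β₀ + σ₀ * s) c) x
      (if dotp x β₀ + σ₀ * s ≤ c then 1 else 0) (fun i => β₀ i / σ₀) (1 / σ₀) j = 0 := by
  set m := dotp x β₀ with hm
  set v : ℝ := (c - m) / σ₀ with hv
  have hσ' : σ₀ ≠ 0 := hσ.ne'
  have hdot : dotp x (fun i => β₀ i / σ₀) = m / σ₀ := by
    rw [hm, dotp, dotp]
    simp_rw [← mul_div_assoc]
    exact (Finset.sum_div _ _ _).symm
  have hcond : ∀ s : ℝ, (m + σ₀ * s ≤ c) ↔ s ≤ v := by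
    intro s
    rw [hv, le_div_iff₀ hσ]
    constructor <;> intro <;> nlinarith
  have harg : 1 / σ₀ * c - m / σ₀ = v := by
    rw [hv]; field_simp
  have hvσ : v * σ₀ = c - m := div_mul_cancel₀ _ hσ'
  have hmne : gCDF v ≠ 0 := (gCDF_pos v).ne'
  obtain (i | u) := j
  · -- first K components
    have hint_eq : ∀ s : ℝ, gPDF s * tobitScore K c (max (m + σ₀ * s) c) x
        (if m + σ₀ * s ≤ c then 1 else 0) (fun i => β₀ i / σ₀) (1 / σ₀) (Sum.inl i) =
        (Ioi v).indicator (fun s => (s * gPDF s) * x i) s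
          + (Iic v).indicator (fun s => gPDF s * (mills (-v) * (-x i))) s := by
      intro s
      rw [tobitScore]
      simp only [Sum.elim_inl, hdot, harg]
      by_cases h : m + σ₀ * s ≤ c
      · have hs : s ≤ v := (hcond s).mp h
        rw [if_pos h, indicator_of_notMem (by simpa using hs.not_gt),
          indicator_of_mem (by simpa using hs)]
        ring
      · have hs : v < s := lt_of_not_ge fun hle => h ((hcond s).mpr hle)
        have hmax : max (m + σ₀ * s) c = m + σ₀ * s :=
          max_eq_left (by push_neg at h; exact h.le)
        rw [if_neg h, hmax, indicator_of_mem (by simpa using hs),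
          indicator_of_notMem (by simpa using hs.not_ge)]
        have hval : 1 / σ₀ * (m + σ₀ * s) - m / σ₀ = s := by field_simp; ring
        rw [hval]
        ring
    rw [integral_congr_ae (Eventually.of_forall hint_eq)]
    have hi1 : Integrable ((Ioi v).indicator (fun s => (s * gPDF s) * x i)) :=
      ((integrable_mul_gPDF.mul_const (x i)).integrableOn).integrable_indicator
        measurableSet_Ioi
    have hi2 : Integrable ((Iic v).indicator
        (fun s => gPDF s * (mills (-v) * (-x i)))) :=
      ((integrable_gPDF.mul_const _).integrableOn).integrable_indicator measurableSet_Iic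
    rw [integral_add hi1 hi2, integral_indicator measurableSet_Ioi,
      integral_indicator measurableSet_Iic, integral_mul_const, integral_mul_const,
      integral_Ioi_mul_gPDF]
    have : ∫ s in Iic v, gPDF s = gCDF v := rfl
    rw [this, mills_neg_eq]
    field_simp
    ring
  · -- last component
    have hint_eq : ∀ s : ℝ, gPDF s * tobitScore K c (max (m + σ₀ * s) c) x
        (if m + σ₀ * s ≤ c then 1 else 0) (fun i => β₀ i / σ₀) (1 / σ₀) (Sum.inr u) =
        (Ioi v).indicator (fun s => σ₀ * gPDF s - m * (s * gPDF s)
            - σ₀ * (s ^ 2 * gPDF s)) s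
          + (Iic v).indicator (fun s => gPDF s * (mills (-v) * c)) s := by
      intro s
      rw [tobitScore]
      simp only [Sum.elim_inr, hdot, harg]
      by_cases h : m + σ₀ * s ≤ c
      · have hs : s ≤ v := (hcond s).mp h
        rw [if_pos h, indicator_of_notMem (by simpa using hs.not_gt),
          indicator_of_mem (by simpa using hs)]
        ring
      · have hs : v < s := lt_of_not_ge fun hle => h ((hcond s).mpr hle)
        have hmax : max (m + σ₀ * s) c = m + σ₀ * s :=
          max_eq_left (by push_neg at h; exact h.le)
        rw [if_neg h, hmax, indicator_of_mem (by simpa using hs),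
          indicator_of_notMem (by simpa using hs.not_ge)]
        have hval : 1 / σ₀ * (m + σ₀ * s) - m / σ₀ = s := by field_simp; ring
        have hinv : 1 / (1 / σ₀) = σ₀ := by field_simp
        rw [hval, hinv]
        ring
    rw [integral_congr_ae (Eventually.of_forall hint_eq)]
    have hint1 : Integrable (fun s : ℝ => σ₀ * gPDF s - m * (s * gPDF s)
        - σ₀ * (s ^ 2 * gPDF s)) :=
      ((integrable_gPDF.const_mul σ₀).sub (integrable_mul_gPDF.const_mul m)).sub
        (integrable_sq_mul_gPDF.const_mul σ₀)
    have hi1 : Integrable ((Ioi v).indicator (fun s : ℝ => σ₀ * gPDF s - m * (s * gPDF s)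
        - σ₀ * (s ^ 2 * gPDF s))) :=
      (hint1.integrableOn).integrable_indicator measurableSet_Ioi
    have hi2 : Integrable ((Iic v).indicator (fun s => gPDF s * (mills (-v) * c))) :=
      ((integrable_gPDF.mul_const _).integrableOn).integrable_indicator measurableSet_Iic
    rw [integral_add hi1 hi2, integral_indicator measurableSet_Ioi,
      integral_indicator measurableSet_Iic]
    have hsub : ∫ s in Ioi v, (σ₀ * gPDF s - m * (s * gPDF s) - σ₀ * (s ^ 2 * gPDF s))
        = σ₀ * (1 - gCDF v) - m * gPDF v - σ₀ * ((1 - gCDF v) + v * gPDF v) := by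
      have ha : IntegrableOn (fun s : ℝ => σ₀ * gPDF s - m * (s * gPDF s)) (Ioi v) :=
        ((integrable_gPDF.const_mul σ₀).sub
          (integrable_mul_gPDF.const_mul m)).integrableOn
      have hb : IntegrableOn (fun s : ℝ => σ₀ * (s ^ 2 * gPDF s)) (Ioi v) :=
        (integrable_sq_mul_gPDF.const_mul σ₀).integrableOn
      have hc : IntegrableOn (fun s : ℝ => σ₀ * gPDF s) (Ioi v) :=
        (integrable_gPDF.const_mul σ₀).integrableOn
      have hd : IntegrableOn (fun s : ℝ => m * (s * gPDF s)) (Ioi v) :=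
        (integrable_mul_gPDF.const_mul m).integrableOn
      rw [integral_sub ha hb, integral_sub hc hd,
        integral_const_mul, integral_const_mul, integral_const_mul,
        integral_Ioi_gPDF, integral_Ioi_mul_gPDF, integral_Ioi_sq_mul_gPDF]
    rw [hsub, integral_mul_const]
    have : ∫ s in Iic v, gPDF s = gCDF v := rfl
    rw [this, mills_neg_eq]
    have hcc : gCDF v * (gPDF v / gCDF v * c) = gPDF v * c := by field_simp
    rw [hcc]
    linear_combination (-(gPDF v)) * hvσ

def Cmills : ℝ := gPDF 0 / (1 - gCDF 1) + 2
def scoreG (K : ℕ) (c σ₀ : ℝ) (β₀ x : Fin K → ℝ) : ℝ :=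
  (Cmills + (|c| + (∑ i, |β₀ i|) * vnorm x) / σ₀) * (vnorm x + |c|)
def scoreH (K : ℕ) (σ₀ : ℝ) (β₀ x : Fin K → ℝ) : ℝ :=
  σ₀⁻¹ * (1 + ∑ i, |β₀ i|) * vnorm x

lemma Cmills_nonneg : 0 ≤ Cmills := by
  have := div_nonneg (gPDF_nonneg 0) (one_sub_gCDF_pos 1).le
  unfold Cmills; linarith

lemma vnorm_nonneg {n : ℕ} (x : Fin n → ℝ) : 0 ≤ vnorm x := Real.sqrt_nonneg _

lemma abs_apply_le_vnorm {n : ℕ} (x : Fin n → ℝ) (i : Fin n) : |x i| ≤ vnorm x := by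
  rw [vnorm, ← Real.sqrt_sq_eq_abs]
  exact Real.sqrt_le_sqrt (Finset.single_le_sum (fun i _ => sq_nonneg (x i))
    (Finset.mem_univ i))

lemma abs_dotp_le {n : ℕ} (x β : Fin n → ℝ) : |dotp x β| ≤ (∑ i, |β i|) * vnorm x := by
  rw [dotp]
  calc |∑ i, x i * β i| ≤ ∑ i, |x i * β i| := Finset.abs_sum_le_sum_abs _ _
    _ ≤ ∑ i, |β i| * vnorm x := by
        apply Finset.sum_le_sum
        intro i _
        rw [abs_mul, mul_comm]
        exact mul_le_mul_of_nonneg_left (abs_apply_le_vnorm x i) (abs_nonneg _)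
    _ = (∑ i, |β i|) * vnorm x := by rw [Finset.sum_mul]

lemma sum_abs_nonneg {n : ℕ} (β : Fin n → ℝ) : 0 ≤ ∑ i, |β i| :=
  Finset.sum_nonneg fun i _ => abs_nonneg _

lemma scoreG_nonneg (K : ℕ) (c σ₀ : ℝ) (hσ : 0 < σ₀) (β₀ x : Fin K → ℝ) :
    0 ≤ scoreG K c σ₀ β₀ x := by
  unfold scoreG
  have h1 := Cmills_nonneg
  have h2 := vnorm_nonneg x
  have h3 := sum_abs_nonneg β₀
  have h4 : 0 ≤ (|c| + (∑ i, |β₀ i|) * vnorm x) / σ₀ := by positivity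
  have h5 := abs_nonneg c
  nlinarith

lemma scoreH_nonneg (K : ℕ) (σ₀ : ℝ) (hσ : 0 < σ₀) (β₀ x : Fin K → ℝ) :
    0 ≤ scoreH K σ₀ β₀ x := by
  unfold scoreH
  have h2 := vnorm_nonneg x
  have h3 := sum_abs_nonneg β₀
  positivity

lemma score_bound (K : ℕ) (c σ₀ : ℝ) (hσ : 0 < σ₀) (β₀ x : Fin K → ℝ) (e : ℝ)
    (j : Fin K ⊕ Unit) :
    |tobitScore K c (max (dotp x β₀ + e) c) x (if dotp x β₀ + e ≤ c then 1 else 0)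
      (fun i => β₀ i / σ₀) (1 / σ₀) j|
    ≤ σ₀ + scoreG K c σ₀ β₀ x + scoreH K σ₀ β₀ x * |e| + σ₀⁻¹ * e ^ 2 := by
  have hσ' : σ₀ ≠ 0 := hσ.ne'
  set m := dotp x β₀ with hm
  set Cβ := ∑ i, |β₀ i| with hCβ
  set nx := vnorm x with hnx
  have hdot : dotp x (fun i => β₀ i / σ₀) = m / σ₀ := by
    rw [hm, dotp, dotp]
    simp_rw [← mul_div_assoc]
    exact (Finset.sum_div _ _ _).symm
  have hnx0 : 0 ≤ nx := vnorm_nonneg x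
  have hCβ0 : 0 ≤ Cβ := sum_abs_nonneg β₀
  have hmabs : |m| ≤ Cβ * nx := abs_dotp_le x β₀
  have hG := scoreG_nonneg K c σ₀ hσ β₀ x
  have hH := scoreH_nonneg K σ₀ hσ β₀ x
  have hHnx : σ₀⁻¹ * nx ≤ scoreH K σ₀ β₀ x := by
    unfold scoreH
    rw [← hnx, ← hCβ]
    have : σ₀⁻¹ * nx ≤ σ₀⁻¹ * (1 + Cβ) * nx := by
      have h1 : σ₀⁻¹ ≤ σ₀⁻¹ * (1 + Cβ) := by
        nlinarith [inv_pos.mpr hσ]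
      exact mul_le_mul_of_nonneg_right h1 hnx0
    exact this
  have hHCβ : σ₀⁻¹ * (Cβ * nx) ≤ scoreH K σ₀ β₀ x := by
    unfold scoreH
    rw [← hnx, ← hCβ]
    have h1 : σ₀⁻¹ * Cβ ≤ σ₀⁻¹ * (1 + Cβ) := by
      nlinarith [inv_pos.mpr hσ]
    nlinarith [inv_pos.mpr hσ]
  have he2 : 0 ≤ σ₀⁻¹ * e ^ 2 := by positivity
  have heabs : 0 ≤ |e| := abs_nonneg e
  by_cases h : m + e ≤ c
  · -- censored branch
    rw [tobitScore]
    simp only [hdot, if_pos h]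
    have hval : (1 - 1) * Sum.elim (fun i => (1 / σ₀ * max (m + e) c - m / σ₀) * x i)
        (fun _ => 1 / (1 / σ₀) - (1 / σ₀ * max (m + e) c - m / σ₀) * max (m + e) c) j
        + 1 * mills (-(1 / σ₀ * c - m / σ₀)) * Sum.elim (fun i => -x i) (fun _ => c) j
        = mills (-(1 / σ₀ * c - m / σ₀)) * Sum.elim (fun i => -x i) (fun _ => c) j := by
      ring
    rw [hval, abs_mul, abs_of_nonneg (mills_nonneg _)]
    have hmills : mills (-(1 / σ₀ * c - m / σ₀)) ≤ Cmills + (|c| + Cβ * nx) / σ₀ := by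
      refine (mills_le _).trans ?_
      unfold Cmills
      have : |(-(1 / σ₀ * c - m / σ₀))| ≤ (|c| + Cβ * nx) / σ₀ := by
        rw [abs_neg]
        have h1 : |1 / σ₀ * c - m / σ₀| ≤ |c| / σ₀ + |m| / σ₀ := by
          calc |1 / σ₀ * c - m / σ₀| ≤ |1 / σ₀ * c| + |m / σ₀| := abs_sub _ _
            _ = |c| / σ₀ + |m| / σ₀ := by
                rw [abs_mul, abs_div, abs_div, abs_of_pos hσ, abs_one]
                ring
        refine h1.trans ?_
        rw [← add_div, div_le_div_iff₀ hσ hσ]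
        nlinarith
      linarith
    have helim : |Sum.elim (fun i => -x i) (fun _ => c) j| ≤ nx + |c| := by
      obtain (i | u) := j
      · simp only [Sum.elim_inl, abs_neg]
        have := abs_apply_le_vnorm x i
        rw [← hnx] at this
        linarith [abs_nonneg c]
      · simp only [Sum.elim_inr]
        linarith
    have hfin : mills (-(1 / σ₀ * c - m / σ₀)) * |Sum.elim (fun i => -x i) (fun _ => c) j|
        ≤ scoreG K c σ₀ β₀ x := by
      unfold scoreG
      rw [← hnx, ← hCβ]
      exact mul_le_mul hmills helim (abs_nonneg _)
        (add_nonneg Cmills_nonneg (by positivity))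
    calc mills (-(1 / σ₀ * c - m / σ₀)) * |Sum.elim (fun i => -x i) (fun _ => c) j|
        ≤ scoreG K c σ₀ β₀ x := hfin
      _ ≤ σ₀ + scoreG K c σ₀ β₀ x + scoreH K σ₀ β₀ x * |e| + σ₀⁻¹ * e ^ 2 := by
          linarith [hσ.le, mul_nonneg hH heabs, he2]
  · -- uncensored branch
    rw [tobitScore]
    simp only [hdot, if_neg h]
    push_neg at h
    have hmax : max (m + e) c = m + e := max_eq_left h.le
    rw [hmax]
    have hval : 1 / σ₀ * (m + e) - m / σ₀ = e / σ₀ := by field_simp; ring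
    obtain (i | u) := j
    · simp only [Sum.elim_inl]
      rw [hval]
      have : (1 - 0) * (e / σ₀ * x i) + 0 * mills (-(1 / σ₀ * c - m / σ₀)) * -x i
          = e / σ₀ * x i := by ring
      rw [this, abs_mul, abs_div, abs_of_pos hσ]
      have h1 : |e| / σ₀ * |x i| ≤ |e| / σ₀ * nx := by
        apply mul_le_mul_of_nonneg_left _ (by positivity)
        rw [hnx]; exact abs_apply_le_vnorm x i
      calc |e| / σ₀ * |x i| ≤ |e| / σ₀ * nx := h1
        _ = σ₀⁻¹ * nx * |e| := by ring
        _ ≤ scoreH K σ₀ β₀ x * |e| := mul_le_mul_of_nonneg_right hHnx heabs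
        _ ≤ σ₀ + scoreG K c σ₀ β₀ x + scoreH K σ₀ β₀ x * |e| + σ₀⁻¹ * e ^ 2 := by
            linarith [hσ.le, hG, he2]
    · simp only [Sum.elim_inr]
      rw [hval]
      have hinv : 1 / (1 / σ₀) = σ₀ := by field_simp
      rw [hinv]
      have hv2 : (1 - 0) * (σ₀ - e / σ₀ * (m + e))
          + 0 * mills (-(1 / σ₀ * c - m / σ₀)) * c = σ₀ - e / σ₀ * (m + e) := by ring
      rw [hv2]
      have h1 : |σ₀ - e / σ₀ * (m + e)| ≤ σ₀ + |e| * |m| / σ₀ + e ^ 2 / σ₀ := by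
        have := abs_sub (σ₀ : ℝ) (e / σ₀ * (m + e))
        have h2 : |e / σ₀ * (m + e)| ≤ |e| * |m| / σ₀ + e ^ 2 / σ₀ := by
          rw [abs_mul, abs_div, abs_of_pos hσ]
          have h3 : |m + e| ≤ |m| + |e| := abs_add_le m e
          have h4 : |e| / σ₀ * |m + e| ≤ |e| / σ₀ * (|m| + |e|) :=
            mul_le_mul_of_nonneg_left h3 (by positivity)
          have h5 : |e| * |e| = e ^ 2 := by rw [← abs_mul, abs_of_nonneg (mul_self_nonneg e)]; ring
          calc |e| / σ₀ * |m + e| ≤ |e| / σ₀ * (|m| + |e|) := h4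
            _ = |e| * |m| / σ₀ + |e| * |e| / σ₀ := by ring
            _ = |e| * |m| / σ₀ + e ^ 2 / σ₀ := by rw [h5]
        calc |σ₀ - e / σ₀ * (m + e)| ≤ |σ₀| + |e / σ₀ * (m + e)| := abs_sub _ _
          _ ≤ σ₀ + (|e| * |m| / σ₀ + e ^ 2 / σ₀) := by
              rw [abs_of_pos hσ]; linarith
          _ = σ₀ + |e| * |m| / σ₀ + e ^ 2 / σ₀ := by ring
      have h6 : |e| * |m| / σ₀ ≤ (σ₀⁻¹ * (Cβ * nx)) * |e| := by
        rw [div_le_iff₀ hσ]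
        have : |e| * |m| ≤ |e| * (Cβ * nx) := mul_le_mul_of_nonneg_left hmabs heabs
        calc |e| * |m| ≤ |e| * (Cβ * nx) := this
          _ = σ₀⁻¹ * (Cβ * nx) * |e| * σ₀ := by field_simp
      have h7 : e ^ 2 / σ₀ = σ₀⁻¹ * e ^ 2 := by ring
      have h8 := mul_le_mul_of_nonneg_right hHCβ heabs
      linarith [hG]

lemma gaussianPDFReal_zero_one : gaussianPDFReal 0 1 = gPDF := by
  funext x
  rw [gaussianPDFReal, gPDF]
  push_cast
  norm_num

lemma continuous_vnorm {n : ℕ} : Continuous (vnorm (n := n)) := by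
  unfold vnorm
  exact Real.continuous_sqrt.comp (continuous_finset_sum _ fun i _ => (continuous_apply i).pow 2)


/-- In the Tobit model the conditional expectation of the score at the true parameters
given `σ(X)` vanishes almost surely. -/
theorem tobit_condexp_score_eq_zero (K : ℕ) (hK : 0 < K) {Ω : Type*} [MeasurableSpace Ω]
    (P : Measure Ω) [IsProbabilityMeasure P]
    (X : Ω → Fin K → ℝ) (hX : Measurable X) (ε : Ω → ℝ) (hε : Measurable ε)
    (σ₀ : ℝ) (hσ : 0 < σ₀)
    (hgauss : Measure.map ε P = gaussianReal 0 ⟨σ₀ ^ 2, sq_nonneg σ₀⟩)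
    (hindep : IndepFun X ε P)
    (β₀ : Fin K → ℝ) (c : ℝ)
    (Y : Ω → ℝ) (hY : ∀ ω, Y ω = max (dotp (X ω) β₀ + ε ω) c)
    (D : Ω → ℝ) (hD : ∀ ω, D ω = if dotp (X ω) β₀ + ε ω ≤ c then 1 else 0)
    (δ₀ : Fin K → ℝ) (hδ₀ : δ₀ = fun i => β₀ i / σ₀) (γ₀ : ℝ) (hγ₀ : γ₀ = 1 / σ₀)
    (hint : Integrable (fun ω => vnorm (X ω) ^ 2) P) :
    ∀ j, P[(fun ω => tobitScore K c (Y ω) (X ω) (D ω) δ₀ γ₀ j) |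
      MeasurableSpace.comap X inferInstance] =ᵐ[P] 0 := by
  subst hδ₀ hγ₀
  intro j
  have hm : MeasurableSpace.comap X inferInstance ≤ ‹MeasurableSpace Ω› := hX.comap_le
  haveI : SigmaFinite (P.trim hm) := by
    haveI : IsFiniteMeasure (P.trim hm) :=
      ⟨by rw [trim_measurableSet_eq hm MeasurableSet.univ]; exact measure_lt_top P univ⟩
    infer_instance
  -- the score as a function of (x, e)
  set F : (Fin K → ℝ) × ℝ → ℝ := fun p =>
    tobitScore K c (max (dotp p.1 β₀ + p.2) c) p.1
      (if dotp p.1 β₀ + p.2 ≤ c then 1 else 0) (fun i => β₀ i / σ₀) (1 / σ₀) j with hF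
  have hFeq : (fun ω => tobitScore K c (Y ω) (X ω) (D ω)
      (fun i => β₀ i / σ₀) (1 / σ₀) j) = fun ω => F (X ω, ε ω) := by
    funext ω
    rw [hF, hY, hD]
  rw [hFeq]
  -- measurability of F
  have hdm : Measurable (fun p : (Fin K → ℝ) × ℝ => dotp p.1 β₀) := by
    unfold dotp
    exact Finset.measurable_sum _ fun i _ =>
      ((measurable_pi_apply i).comp measurable_fst).mul_const _
  have hdotδ : Measurable (fun p : (Fin K → ℝ) × ℝ => dotp p.1 (fun i => β₀ i / σ₀)) := by
    unfold dotp
    exact Finset.measurable_sum _ fun i _ =>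
      ((measurable_pi_apply i).comp measurable_fst).mul_const _
  have hsum : Measurable (fun p : (Fin K → ℝ) × ℝ => dotp p.1 β₀ + p.2) :=
    hdm.add measurable_snd
  have hymeas : Measurable (fun p : (Fin K → ℝ) × ℝ => max (dotp p.1 β₀ + p.2) c) :=
    hsum.max measurable_const
  have hdmeas : Measurable (fun p : (Fin K → ℝ) × ℝ =>
      if dotp p.1 β₀ + p.2 ≤ c then (1:ℝ) else 0) :=
    Measurable.ite (measurableSet_le hsum measurable_const) measurable_const measurable_const
  have hxi : ∀ i, Measurable (fun p : (Fin K → ℝ) × ℝ => p.1 i) := fun i =>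
    (measurable_pi_apply i).comp measurable_fst
  have hFmeas : Measurable F := by
    rw [hF]
    unfold tobitScore
    apply Measurable.add
    · apply Measurable.mul (measurable_const.sub hdmeas)
      obtain (i | u) := j
      · exact ((measurable_const.mul hymeas).sub hdotδ).mul (hxi i)
      · exact measurable_const.sub (((measurable_const.mul hymeas).sub hdotδ).mul hymeas)
    · apply Measurable.mul
      · exact hdmeas.mul (measurable_mills.comp (measurable_const.sub hdotδ).neg)
      · obtain (i | u) := j
        · exact (hxi i).neg
        · exact measurable_const
  have hpair : Measurable (fun ω => (X ω, ε ω)) := hX.prodMk hε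
  -- integrability machinery
  have hnxm : Measurable (fun ω => vnorm (X ω)) := continuous_vnorm.measurable.comp hX
  have hnxint : Integrable (fun ω => vnorm (X ω)) P := by
    refine ((integrable_const (1:ℝ)).add hint).mono' hnxm.aestronglyMeasurable
      (Eventually.of_forall fun ω => ?_)
    show ‖vnorm (X ω)‖ ≤ 1 + vnorm (X ω) ^ 2
    rw [norm_eq_abs, abs_of_nonneg (show (0:ℝ) ≤ vnorm (X ω) from Real.sqrt_nonneg _)]
    nlinarith [sq_nonneg (vnorm (X ω) - 1), Real.sqrt_nonneg (∑ i, (X ω i) ^ 2)]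
  have hGint : Integrable (fun ω => scoreG K c σ₀ β₀ (X ω)) P := by
    have heq : (fun ω => scoreG K c σ₀ β₀ (X ω)) = fun ω =>
        (Cmills * |c| + |c| * |c| / σ₀)
          + (Cmills + |c| / σ₀ + (∑ i, |β₀ i|) * |c| / σ₀) * vnorm (X ω)
          + ((∑ i, |β₀ i|) / σ₀) * vnorm (X ω) ^ 2 := by
      funext ω
      unfold scoreG
      ring
    rw [heq]
    exact ((integrable_const _).add (hnxint.const_mul _)).add (hint.const_mul _)
  have hHint : Integrable (fun ω => scoreH K σ₀ β₀ (X ω)) P := by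
    have heq : (fun ω => scoreH K σ₀ β₀ (X ω)) = fun ω =>
        (σ₀⁻¹ * (1 + ∑ i, |β₀ i|)) * vnorm (X ω) := by
      funext ω; unfold scoreH; ring
    rw [heq]
    exact hnxint.const_mul _
  have hmapε : Measure.map ε P = Measure.map (fun s => σ₀ * s) (gaussianReal 0 1) := by
    have h1 : (gaussianReal (0:ℝ) (1:ℝ≥0)).map (fun x => σ₀ * x)
        = gaussianReal (σ₀ * 0) (@HMul.hMul ℝ≥0 ℝ≥0 ℝ≥0 _ ⟨σ₀ ^ 2, sq_nonneg _⟩ 1) := gaussianReal_map_const_mul σ₀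
    have e1 : (@HMul.hMul ℝ≥0 ℝ≥0 ℝ≥0 _ ⟨σ₀ ^ 2, sq_nonneg _⟩ 1) = ⟨σ₀ ^ 2, sq_nonneg _⟩ := mul_one _
    rw [mul_zero, e1] at h1
    rw [hgauss]
    exact h1.symm
  have hN : gaussianReal (0:ℝ) 1 = volume.withDensity
      (fun s => ((gPDF s).toNNReal : ℝ≥0∞)) := by
    rw [gaussianReal_of_var_ne_zero 0 one_ne_zero]
    congr 1
    funext s
    rw [gaussianPDF, gaussianPDFReal_zero_one]
    rfl
  have hepint : ∀ (G : ℝ → ℝ), Measurable G →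
      Integrable (fun s => G (σ₀ * s) * gPDF s) volume →
      Integrable (fun ω => G (ε ω)) P := by
    intro G hG hGi
    have h1 : Integrable G (Measure.map ε P) := by
      rw [hmapε, integrable_map_measure hG.aestronglyMeasurable
        (measurable_const_mul σ₀).aemeasurable, hN,
        integrable_withDensity_iff (f := fun s => (((gPDF s).toNNReal : ℝ≥0) : ℝ≥0∞))
          continuous_gPDF.measurable.real_toNNReal.coe_nnreal_ennreal
          (Eventually.of_forall fun s => ENNReal.coe_lt_top)]
      refine hGi.congr (Eventually.of_forall fun s => ?_)
      simp only [Function.comp]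
      rw [ENNReal.coe_toReal, Real.coe_toNNReal _ (gPDF_nonneg s)]
    exact (integrable_map_measure hG.aestronglyMeasurable hε.aemeasurable).mp h1
  have habs_e : Integrable (fun ω => |ε ω|) P := by
    refine hepint abs measurable_abs ?_
    refine (integrable_abs_mul_gPDF.const_mul σ₀).congr (Eventually.of_forall fun s => ?_)
    show σ₀ * (|s| * gPDF s) = |σ₀ * s| * gPDF s
    rw [abs_mul, abs_of_pos hσ]
    ring
  have hsq_e : Integrable (fun ω => (ε ω) ^ 2) P := by
    refine hepint (fun t => t ^ 2) (measurable_id.pow_const 2) ?_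
    refine (integrable_sq_mul_gPDF.const_mul (σ₀ ^ 2)).congr (Eventually.of_forall fun s => ?_)
    show σ₀ ^ 2 * (s ^ 2 * gPDF s) = (σ₀ * s) ^ 2 * gPDF s
    ring
  have hHe : Integrable (fun ω => scoreH K σ₀ β₀ (X ω) * |ε ω|) P := by
    have hSm : Measurable (scoreH K σ₀ β₀) := continuous_vnorm.measurable.const_mul _
    have hind2 : IndepFun ((scoreH K σ₀ β₀) ∘ X) (abs ∘ ε) P :=
      hindep.comp hSm measurable_abs
    have h1 : Integrable ((scoreH K σ₀ β₀) ∘ X) P := hHint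
    have h2 : Integrable (abs ∘ ε) P := habs_e
    have h3 := hind2.integrable_mul h1 h2
    exact h3
  have hfint : Integrable (fun ω => F (X ω, ε ω)) P := by
    have hgint : Integrable (fun ω => σ₀ + scoreG K c σ₀ β₀ (X ω)
        + scoreH K σ₀ β₀ (X ω) * |ε ω| + σ₀⁻¹ * (ε ω) ^ 2) P :=
      (((integrable_const σ₀).add hGint).add hHe).add (hsq_e.const_mul σ₀⁻¹)
    refine hgint.mono' (hFmeas.comp hpair).aestronglyMeasurable
      (Eventually.of_forall fun ω => ?_)
    rw [norm_eq_abs]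
    exact score_bound K c σ₀ hσ β₀ (X ω) (ε ω) j
  -- joint law
  have hjoint := (indepFun_iff_map_prod_eq_prod_map_map hX.aemeasurable hε.aemeasurable).mp hindep
  have hFν : Integrable F ((Measure.map X P).prod (Measure.map ε P)) := by
    rw [← hjoint]
    exact (integrable_map_measure hFmeas.aestronglyMeasurable hpair.aemeasurable).mpr hfint
  -- inner integral vanishes
  have hinner : ∀ x : Fin K → ℝ, ∫ e, F (x, e) ∂(Measure.map ε P) = 0 := by
    intro x
    have hFx : Measurable (fun e => F (x, e)) := hFmeas.comp measurable_prodMk_left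
    rw [hmapε, integral_map (measurable_const_mul σ₀).aemeasurable
      hFx.aestronglyMeasurable, hN,
      integral_withDensity_eq_integral_smul continuous_gPDF.measurable.real_toNNReal]
    have hz := inner_integral_zero K c σ₀ hσ β₀ x j
    rw [← hz]
    refine integral_congr_ae (Eventually.of_forall fun s => ?_)
    show ((gPDF s).toNNReal : ℝ≥0) • F (x, σ₀ * s) = _
    rw [NNReal.smul_def, Real.coe_toNNReal _ (gPDF_nonneg s), hF, smul_eq_mul]
  -- set integrals vanish
  have hzero : ∀ s, MeasurableSet[MeasurableSpace.comap X inferInstance] s →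
      ∫ ω in s, F (X ω, ε ω) ∂P = 0 := by
    rintro s ⟨B, hB, rfl⟩
    have hpre : (fun ω => (X ω, ε ω)) ⁻¹' (B ×ˢ univ) = X ⁻¹' B := by
      ext ω; simp
    rw [← hpre, ← setIntegral_map (hB.prod MeasurableSet.univ)
      hFmeas.aestronglyMeasurable hpair.aemeasurable, hjoint,
      setIntegral_prod _ hFν.integrableOn]
    have : ∀ x : Fin K → ℝ, ∫ e in univ, F (x, e) ∂(Measure.map ε P) = 0 := by
      intro x
      rw [Measure.restrict_univ]
      exact hinner x
    calc ∫ x in B, ∫ e in univ, F (x, e) ∂(Measure.map ε P) ∂(Measure.map X P)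
        = ∫ _x in B, (0:ℝ) ∂(Measure.map X P) :=
          integral_congr_ae (Eventually.of_forall fun x => this x)
      _ = 0 := by simp
  have h0 := ae_eq_condExp_of_forall_setIntegral_eq (f := fun ω => F (X ω, ε ω))
    (g := fun _ => (0:ℝ)) hm hfint
    (fun s _ _ => integrableOn_zero)
    (fun s hs _ => by rw [integral_zero, (hzero s hs)])
    stronglyMeasurable_const.aestronglyMeasurable
  exact h0.symm
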